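/- arXiv:math/0206072 — 5 statements merged into one kernel-verified Lean document; each statement's English description precedes it below -/
import Mathlib

section
/- Let f, g, H be elements of the Laurent polynomial ring ℤ[T,T⁻¹] and let ε ∈ {1, −1}. If ε·(H · invert(H)) = f·(4T − 7 + 4T⁻¹) + 2·(g · invert(g)), then the Laurent polynomial 4T − 7 + 4T⁻¹ divides g in ℤ[T,T⁻¹]. -/
open LaurentPolynomial Polynomial QuadraticAlgebra

/-!
Evaluate at the root `α = (7 + √-15)/8` of `Δ = 4T − 7 + 4T⁻¹` in `ℚ(√-15)`. Since `α` has norm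
one, `invert` becomes conjugation, so the hypothesis turns into `ε · N(H(α)) = 2 · N(g(α))` for the
norm form `N(x + y√-15) = x² + 15y²`. For `ε = -1` both sides vanish by positivity; for `ε = 1`
infinite descent modulo `3` shows that `x² + 15y² = 2(z² + 15w²)` has only the trivial rational
solution. Hence `g(α) = 0`, and Gauss's lemma for the primitive polynomial `4X² − 7X + 4`, which is
irreducible over `ℚ`, gives `Δ ∣ g`.
-/

theorem Int.three_dvd_of_three_dvd_sq_sub_two_mul_sq {a c : ℤ} (h : 3 ∣ a ^ 2 - 2 * c ^ 2) :
    3 ∣ a ∧ 3 ∣ c := by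
  have hmod3 : ∀ x y : ZMod 3, x ^ 2 - 2 * y ^ 2 = 0 → x = 0 ∧ y = 0 := by decide
  obtain ⟨ha, hc⟩ := hmod3 a c (by exact_mod_cast (ZMod.intCast_zmod_eq_zero_iff_dvd _ 3).mpr h)
  exact ⟨(ZMod.intCast_zmod_eq_zero_iff_dvd a 3).mp ha, (ZMod.intCast_zmod_eq_zero_iff_dvd c 3).mp hc⟩

theorem Int.sq_add_fifteen_sq_descent {a b c d : ℤ}
    (h : a ^ 2 + 15 * b ^ 2 = 2 * (c ^ 2 + 15 * d ^ 2)) :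
    ∃ a' b' c' d' : ℤ, a = 3 * a' ∧ b = 3 * b' ∧ c = 3 * c' ∧ d = 3 * d' ∧
      a' ^ 2 + 15 * b' ^ 2 = 2 * (c' ^ 2 + 15 * d' ^ 2) := by
  obtain ⟨⟨a', rfl⟩, ⟨c', rfl⟩⟩ := Int.three_dvd_of_three_dvd_sq_sub_two_mul_sq (a := a) (c := c)
    ⟨5 * (2 * d ^ 2 - b ^ 2), by linear_combination h⟩
  obtain ⟨⟨b', rfl⟩, ⟨d', rfl⟩⟩ := Int.three_dvd_of_three_dvd_sq_sub_two_mul_sq (a := b) (c := d)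
    ⟨2 * (b ^ 2 - 2 * d ^ 2) + a' ^ 2 - 2 * c' ^ 2, by linarith⟩
  exact ⟨a', b', c', d', rfl, rfl, rfl, rfl, by linarith⟩

theorem Int.pow_three_dvd_of_sq_add_fifteen_sq_eq (n : ℕ) {a b c d : ℤ}
    (h : a ^ 2 + 15 * b ^ 2 = 2 * (c ^ 2 + 15 * d ^ 2)) :
    3 ^ n ∣ a ∧ 3 ^ n ∣ b ∧ 3 ^ n ∣ c ∧ 3 ^ n ∣ d := by
  induction n generalizing a b c d with
  | zero => simp
  | succ n ih =>
    obtain ⟨a', b', c', d', rfl, rfl, rfl, rfl, h'⟩ := Int.sq_add_fifteen_sq_descent h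
    obtain ⟨ha, hb, hc, hd⟩ := ih h'
    simp only [pow_succ']
    exact ⟨mul_dvd_mul_left 3 ha, mul_dvd_mul_left 3 hb, mul_dvd_mul_left 3 hc,
      mul_dvd_mul_left 3 hd⟩

theorem Int.eq_zero_of_sq_add_fifteen_sq_eq {a b c d : ℤ}
    (h : a ^ 2 + 15 * b ^ 2 = 2 * (c ^ 2 + 15 * d ^ 2)) :
    a = 0 ∧ b = 0 ∧ c = 0 ∧ d = 0 := by
  have eq_zero {x : ℤ} (hx : ∀ n : ℕ, 3 ^ n ∣ x) : x = 0 := by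
    by_contra hx0
    exact FiniteMultiplicity.not_iff_forall.mpr hx
      (Int.finiteMultiplicity_iff.mpr ⟨by decide, hx0⟩)
  have hdvd := fun n ↦ Int.pow_three_dvd_of_sq_add_fifteen_sq_eq n h
  exact ⟨eq_zero fun n ↦ (hdvd n).1, eq_zero fun n ↦ (hdvd n).2.1,
    eq_zero fun n ↦ (hdvd n).2.2.1, eq_zero fun n ↦ (hdvd n).2.2.2⟩

theorem Rat.eq_zero_of_sq_add_fifteen_sq_eq {x y z w : ℚ}
    (h : x ^ 2 + 15 * y ^ 2 = 2 * (z ^ 2 + 15 * w ^ 2)) :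
    x = 0 ∧ y = 0 ∧ z = 0 ∧ w = 0 := by
  set D : ℚ := x.den * y.den * z.den * w.den
  have hD : D ≠ 0 := by positivity
  set a : ℤ := x.num * y.den * z.den * w.den
  set b : ℤ := x.den * y.num * z.den * w.den
  set c : ℤ := x.den * y.den * z.num * w.den
  set d : ℤ := x.den * y.den * z.den * w.num
  have ha : D * x = a := by simp only [a, D]; push_cast; rw [← Rat.mul_den_eq_num]; ring
  have hb : D * y = b := by simp only [b, D]; push_cast; rw [← Rat.mul_den_eq_num]; ring
  have hc : D * z = c := by simp only [c, D]; push_cast; rw [← Rat.mul_den_eq_num]; ring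
  have hd : D * w = d := by simp only [d, D]; push_cast; rw [← Rat.mul_den_eq_num]; ring
  have habcd : (a : ℚ) ^ 2 + 15 * b ^ 2 = 2 * (c ^ 2 + 15 * d ^ 2) := by
    rw [← ha, ← hb, ← hc, ← hd]
    linear_combination D ^ 2 * h
  obtain ⟨ha0, hb0, hc0, hd0⟩ := Int.eq_zero_of_sq_add_fifteen_sq_eq (by exact_mod_cast habcd)
  simp_all

theorem Irreducible.dvd_of_aeval_eq_zero {F A : Type*} [Field F] [CommRing A] [Nontrivial A]
    [Algebra F A] {q p : F[X]} (hq : Irreducible q) {x : A}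
    (hqx : aeval x q = 0) (hpx : aeval x p = 0) : q ∣ p := by
  by_contra hqp
  obtain ⟨u, v, huv⟩ := hq.coprime_iff_not_dvd.mpr hqp
  simpa [hqx, hpx] using congrArg (aeval x) huv

theorem LaurentPolynomial.toLaurent_dvd_of_eval₂_eq_zero {A : Type*} [CommRing A] [Nontrivial A]
    [Algebra ℚ A] {q : ℤ[X]} (hq : q.IsPrimitive)
    (hirr : Irreducible (q.map (Int.castRingHom ℚ))) {x : Aˣ}
    (hqx : q.eval₂ (Int.castRingHom A) x = 0) {g : ℤ[T;T⁻¹]}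
    (hg : eval₂ (Int.castRingHom A) x g = 0) : toLaurent q ∣ g := by
  obtain ⟨n, p, hp⟩ := exists_T_pow g
  have hpx : p.eval₂ (Int.castRingHom A) x = 0 := by
    rw [← eval₂_toLaurent, hp, map_mul, hg, zero_mul]
  have aeval_map (r : ℤ[X]) :
      aeval (x : A) (r.map (Int.castRingHom ℚ)) = r.eval₂ (Int.castRingHom A) x := by
    rw [← algebraMap_int_eq, aeval_map_algebraMap, aeval_def, algebraMap_int_eq]
  have hqp : q ∣ p := (IsPrimitive.Int.dvd_iff_map_cast_dvd_map_cast q p hq).mpr <|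
    hirr.dvd_of_aeval_eq_zero (by rwa [aeval_map]) (by rwa [aeval_map])
  rw [← (isUnit_T (n : ℤ)).dvd_mul_right, ← hp]
  exact map_dvd toLaurent hqp

theorem LaurentPolynomial.eval₂_intCast_invert {S : Type*} [CommRing S] [StarRing S] {x : Sˣ}
    (hx : star (x : S) = ↑x⁻¹) (p : ℤ[T;T⁻¹]) :
    eval₂ (Int.castRingHom S) x (invert p) = star (eval₂ (Int.castRingHom S) x p) := by
  have star_zpow (n : ℤ) : star ((x ^ n : Sˣ) : S) = ↑(x ^ n)⁻¹ := by
    have hstar : Units.map (starRingEnd S : S →* S) x = x⁻¹ := Units.ext hx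
    rw [← inv_zpow, ← hstar, ← map_zpow]
    rfl
  induction p using LaurentPolynomial.induction_on' with
  | add p q hp hq => simp only [map_add, hp, hq, star_add]
  | C_mul_T n a => simp [star_zpow, zpow_neg]

theorem QuadraticAlgebra.norm_eq_sq_sub_mul_sq {R : Type*} [CommRing R] {a : R}
    (z : QuadraticAlgebra R a 0) : z.norm = z.re ^ 2 - a * z.im ^ 2 := by
  rw [norm_def]
  ring

section SqrtNegFifteen

-- `ℚ(√-15)`, with `⟨x, y⟩` standing for `x + y√-15`.
local notation "𝕂" => QuadraticAlgebra ℚ (-15) 0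

def delta74Root : 𝕂ˣ where
  val := ⟨7 / 8, 1 / 8⟩
  inv := ⟨7 / 8, -(1 / 8)⟩
  val_inv := by ext <;> norm_num
  inv_val := by ext <;> norm_num

theorem star_delta74Root : star (delta74Root : 𝕂) = ↑delta74Root⁻¹ := by
  ext <;> simp [delta74Root]

noncomputable def delta74Poly : ℤ[X] := 4 * X ^ 2 - 7 * X + 4

theorem toLaurent_delta74Poly :
    toLaurent delta74Poly = (4 * T 1 - 7 + 4 * T (-1)) * T 1 := by
  simp [delta74Poly, sub_mul, add_mul, map_ofNat]

theorem isPrimitive_delta74Poly : delta74Poly.IsPrimitive := by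
  intro r hr
  rw [C_dvd_iff_dvd_coeff] at hr
  have h0 : r ∣ 4 := by simpa [delta74Poly, coeff_X] using hr 0
  have h1 : r ∣ 7 := by simpa [delta74Poly, coeff_X] using hr 1
  exact isUnit_of_dvd_one (by simpa using dvd_sub (h0.mul_left 2) h1)

theorem irreducible_map_delta74Poly : Irreducible (delta74Poly.map (Int.castRingHom ℚ)) := by
  apply irreducible_of_degree_le_three_of_not_isRoot
  · have : (delta74Poly.map (Int.castRingHom ℚ)).natDegree = 2 := by
      simp only [delta74Poly, Polynomial.map_add, Polynomial.map_sub, Polynomial.map_mul,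
        Polynomial.map_ofNat, Polynomial.map_pow, map_X]
      compute_degree!
    simp [this]
  · intro x hx
    have : 4 * x ^ 2 - 7 * x + 4 = 0 := by simpa [delta74Poly] using hx
    nlinarith [sq_nonneg (8 * x - 7)]

theorem eval₂_delta74Poly_delta74Root :
    delta74Poly.eval₂ (Int.castRingHom 𝕂) delta74Root = 0 := by
  norm_num [delta74Poly, delta74Root, pow_two, QuadraticAlgebra.ext_iff]

theorem eval₂_delta74Root_delta74 :
    LaurentPolynomial.eval₂ (Int.castRingHom 𝕂) delta74Root (4 * T 1 - 7 + 4 * T (-1)) = 0 := by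
  have := congrArg (LaurentPolynomial.eval₂ (Int.castRingHom 𝕂) delta74Root) toLaurent_delta74Poly
  rw [eval₂_toLaurent, eval₂_delta74Poly_delta74Root, map_mul, eval₂_T] at this
  exact (delta74Root ^ (1 : ℤ)).isUnit.mul_left_eq_zero.mp this.symm

theorem eq_zero_of_intCast_mul_norm_eq_two_mul_norm {ε : ℤ} (hε : ε = 1 ∨ ε = -1) {u v : 𝕂}
    (h : ε * u.norm = 2 * v.norm) : v = 0 := by
  simp only [QuadraticAlgebra.norm_eq_sq_sub_mul_sq] at h
  suffices v.re = 0 ∧ v.im = 0 by ext <;> simp [this]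
  rcases hε with rfl | rfl <;> push_cast at h
  · obtain ⟨-, -, hre, him⟩ := Rat.eq_zero_of_sq_add_fifteen_sq_eq (x := u.re) (y := u.im)
      (z := v.re) (w := v.im) (by linear_combination h)
    exact ⟨hre, him⟩
  · constructor <;> nlinarith [sq_nonneg u.re, sq_nonneg u.im, sq_nonneg v.re, sq_nonneg v.im]

/-- Key Lemma (Section 4): if `±H(t)H(t⁻¹) = f(t)·Δ_{7₄}(t) + 2·g(t)·g(t⁻¹)` in
`ℤ[T,T⁻¹]`, then the Alexander polynomial `Δ_{7₄} = 4T − 7 + 4T⁻¹` divides `g`. -/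
theorem delta74_divides_g (f g H : LaurentPolynomial ℤ) (ε : ℤ) (hε : ε = 1 ∨ ε = -1)
    (h : (ε : LaurentPolynomial ℤ) * (H * invert H) =
      f * (4 * T 1 - 7 + 4 * T (-1)) + 2 * (g * invert g)) :
    (4 * T 1 - 7 + 4 * T (-1) : LaurentPolynomial ℤ) ∣ g := by
  set φ := LaurentPolynomial.eval₂ (Int.castRingHom 𝕂) delta74Root
  have hφ_invert (p : ℤ[T;T⁻¹]) : φ (invert p) = star (φ p) :=
    eval₂_intCast_invert star_delta74Root p
  have hΔ : φ (4 * T 1 - 7 + 4 * T (-1)) = 0 := eval₂_delta74Root_delta74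
  have hnorm : (ε : ℚ) * (φ H).norm = 2 * (φ g).norm := by
    apply QuadraticAlgebra.algebraMap_injective (a := (-15 : ℚ)) (b := 0)
    simpa only [map_mul, map_add, map_intCast, map_ofNat, hΔ, mul_zero,
      zero_add, hφ_invert, ← algebraMap_norm_eq_mul_star] using congrArg φ h
  have hg : φ g = 0 := eq_zero_of_intCast_mul_norm_eq_two_mul_norm hε hnorm
  exact (Dvd.intro _ toLaurent_delta74Poly.symm).trans <| toLaurent_dvd_of_eval₂_eq_zero
    isPrimitive_delta74Poly irreducible_map_delta74Poly eval₂_delta74Poly_delta74Root hg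

end SqrtNegFifteen
end

section
/- For all integers a, b, c, if a² + 15·b² = 2·c², then a = 0, b = 0 and c = 0. -/
lemma mod5_ac : ∀ x y z : ZMod 5, x ^ 2 + 15 * y ^ 2 = 2 * z ^ 2 → x = 0 ∧ z = 0 := by
  decide

lemma mod5_b : ∀ x y z : ZMod 5, 5 * x ^ 2 + 3 * y ^ 2 = 10 * z ^ 2 → y = 0 := by
  decide

lemma descent : ∀ n : ℕ, ∀ a b c : ℤ, a.natAbs + b.natAbs + c.natAbs = n →
    a ^ 2 + 15 * b ^ 2 = 2 * c ^ 2 → a = 0 ∧ b = 0 ∧ c = 0 := by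
  intro n
  induction n using Nat.strong_induction_on with
  | _ n ih =>
    intro a b c hn h
    rcases Nat.eq_zero_or_pos n with h0 | hpos
    · subst h0
      omega
    have h5 : ((a : ZMod 5)) ^ 2 + 15 * (b : ZMod 5) ^ 2 = 2 * (c : ZMod 5) ^ 2 := by
      exact_mod_cast congrArg (Int.cast : ℤ → ZMod 5) h
    obtain ⟨ha, hc⟩ := mod5_ac _ _ _ h5
    obtain ⟨a', rfl⟩ := (ZMod.intCast_zmod_eq_zero_iff_dvd a 5).mp ha
    obtain ⟨c', rfl⟩ := (ZMod.intCast_zmod_eq_zero_iff_dvd c 5).mp hc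
    have h2 : 5 * a' ^ 2 + 3 * b ^ 2 = 10 * c' ^ 2 := by ring_nf at h ⊢; linarith
    have h5b : (5 : ZMod 5) * (a' : ZMod 5) ^ 2 + 3 * (b : ZMod 5) ^ 2
        = 10 * (c' : ZMod 5) ^ 2 := by
      exact_mod_cast congrArg (Int.cast : ℤ → ZMod 5) h2
    have hb := mod5_b _ _ _ h5b
    obtain ⟨b', rfl⟩ := (ZMod.intCast_zmod_eq_zero_iff_dvd b 5).mp hb
    have h3 : a' ^ 2 + 15 * b' ^ 2 = 2 * c' ^ 2 := by ring_nf at h2 ⊢; linarith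
    have hna : (5 * a').natAbs = 5 * a'.natAbs := by simp [Int.natAbs_mul]
    have hnb : (5 * b').natAbs = 5 * b'.natAbs := by simp [Int.natAbs_mul]
    have hnc : (5 * c').natAbs = 5 * c'.natAbs := by simp [Int.natAbs_mul]
    have hlt : a'.natAbs + b'.natAbs + c'.natAbs < n := by omega
    obtain ⟨ea, eb, ec⟩ := ih _ hlt a' b' c' rfl h3
    subst ea; subst eb; subst ec
    simp

/-- The equation `a² + 15b² = 2c²` has no nontrivial integer solutions. -/
theorem no_nontrivial_solution (a b c : ℤ) (h : a ^ 2 + 15 * b ^ 2 = 2 * c ^ 2) :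
    a = 0 ∧ b = 0 ∧ c = 0 := by
  exact descent _ a b c rfl h
end

section
/- Let ε ∈ {1, −1}. There do not exist integers a, b, c with gcd(a, b, c) = 1 such that ε·2·c² − a² − 15·b² = 0. -/
/-!
For `ε = -1` the left-hand side is a negative definite form, so only `a = b = c = 0` solves it.
For `ε = 1`, reducing `a² + 15b² = 2c²` modulo 3 gives `a² ≡ 2c²`, and since `2` is not a square
mod 3 this forces `3 ∣ a` and `3 ∣ c`; then `9 ∣ 15b²`, so `3 ∣ b` as well, against coprimality.
-/

theorem ZMod.eq_zero_of_sq_eq_two_mul_sq {x y : ZMod 3} (h : x ^ 2 = 2 * y ^ 2) :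
    x = 0 ∧ y = 0 := by
  revert x y; decide

theorem Int.three_dvd_of_sq_add_fifteen_mul_sq_eq_two_mul_sq {a b c : ℤ}
    (h : a ^ 2 + 15 * b ^ 2 = 2 * c ^ 2) : 3 ∣ a ∧ 3 ∣ b ∧ 3 ∣ c := by
  have hmod : (a : ZMod 3) ^ 2 = 2 * (c : ZMod 3) ^ 2 := by
    have := congrArg (Int.cast : ℤ → ZMod 3) h
    push_cast at this
    rwa [show (15 : ZMod 3) = 0 by decide, zero_mul, add_zero] at this
  obtain ⟨ha, hc⟩ := ZMod.eq_zero_of_sq_eq_two_mul_sq hmod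
  obtain ⟨p, rfl⟩ : (3 : ℤ) ∣ a := (ZMod.intCast_zmod_eq_zero_iff_dvd a 3).mp ha
  obtain ⟨q, rfl⟩ : (3 : ℤ) ∣ c := (ZMod.intCast_zmod_eq_zero_iff_dvd c 3).mp hc
  have h5b : (3 : ℤ) ∣ 5 * b ^ 2 := ⟨2 * q ^ 2 - p ^ 2, by linarith⟩
  have hb : (3 : ℤ) ∣ b :=
    Int.prime_three.dvd_of_dvd_pow <| (Int.prime_three.dvd_mul.mp h5b).resolve_left (by norm_num)
  exact ⟨dvd_mul_right 3 p, hb, dvd_mul_right 3 q⟩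

theorem Int.eq_zero_of_sq_add_fifteen_mul_sq_eq_neg_two_mul_sq {a b c : ℤ}
    (h : a ^ 2 + 15 * b ^ 2 = -(2 * c ^ 2)) : a = 0 ∧ b = 0 ∧ c = 0 := by
  refine ⟨?_, ?_, ?_⟩ <;> nlinarith [sq_nonneg a, sq_nonneg b, sq_nonneg c]

/-- There are no coprime integers `a, b, c` with `±2c² − a² − 15b² = 0`. -/
theorem no_coprime_solution (ε : ℤ) (hε : ε = 1 ∨ ε = -1) :
    ¬ ∃ a b c : ℤ, Int.gcd (Int.gcd a b) c = 1 ∧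
      ε * 2 * c ^ 2 - a ^ 2 - 15 * b ^ 2 = 0 := by
  rintro ⟨a, b, c, hgcd, heq⟩
  rcases hε with rfl | rfl
  · obtain ⟨ha, hb, hc⟩ :=
      Int.three_dvd_of_sq_add_fifteen_mul_sq_eq_two_mul_sq
        (by linarith : a ^ 2 + 15 * b ^ 2 = 2 * c ^ 2)
    have h3 : (3 : ℤ) ∣ ((Int.gcd (Int.gcd a b) c : ℕ) : ℤ) :=
      Int.dvd_coe_gcd (Int.dvd_coe_gcd ha hb) hc
    rw [hgcd] at h3
    norm_num at h3
  · obtain ⟨rfl, rfl, rfl⟩ :=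
      Int.eq_zero_of_sq_add_fifteen_mul_sq_eq_neg_two_mul_sq
        (by linarith : a ^ 2 + 15 * b ^ 2 = -(2 * c ^ 2))
    simp at hgcd
end

section
/- Let j, k, l be natural numbers, let x and q be integers not divisible by 5, and let ε ∈ {1, −1}. Then 5^(2k+1) does not divide (as integers) 2·5^(2k) + ε·2·x²·5^(2l)·3^(2j+1)·q². -/
lemma zmod5_aux : ∀ (a b e t : ZMod 5), a ≠ 0 → b ≠ 0 → (e = 1 ∨ e = -1) →
    (t = 2 ∨ t = 3) → 2 + e * 2 * a ^ 2 * t * b ^ 2 ≠ 0 := by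
  intro a b e t ha hb he ht
  fin_cases a <;> fin_cases b <;> rcases he with rfl | rfl <;> rcases ht with rfl | rfl <;>
    simp_all <;> decide

lemma pow3_zmod5 (j : ℕ) : (3 : ZMod 5) ^ (2 * j + 1) = 2 ∨ (3 : ZMod 5) ^ (2 * j + 1) = 3 := by
  have h : (3 : ZMod 5) ^ (2 * j + 1) = 3 * ((-1 : ZMod 5)) ^ j := by
    rw [pow_succ, pow_mul, show ((3:ZMod 5)^2) = -1 from by decide]
    ring
  rcases Nat.even_or_odd j with hj | hj
  · right; rw [h, hj.neg_one_pow]; ring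
  · left; rw [h, hj.neg_one_pow]; decide

lemma z5_5 : (5 : ZMod 5) = 0 := by decide
lemma z5_1 : (1 : ZMod 5) ≠ 0 := by decide
lemma z5_neg1 : (-1 : ZMod 5) ≠ 0 := by decide
lemma z5_2 : (2 : ZMod 5) ≠ 0 := by decide
lemma z5_3 : (3 : ZMod 5) ≠ 0 := by decide

/-- Core computation in Theorem 2: the self-linking
`2/5 + ε·2x²·5^{2l}·3^{2j+1}q²/5^{2k+1}` is never `0` in `ℚ/ℤ`. -/
theorem self_linking_nonzero (j k l : ℕ) (x q : ℤ) (hx : ¬ (5 : ℤ) ∣ x)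
    (hq : ¬ (5 : ℤ) ∣ q) (ε : ℤ) (hε : ε = 1 ∨ ε = -1) :
    ¬ ((5 : ℤ) ^ (2 * k + 1) ∣
      2 * 5 ^ (2 * k) + ε * 2 * x ^ 2 * 5 ^ (2 * l) * 3 ^ (2 * j + 1) * q ^ 2) := by
  intro h
  haveI : Fact (Nat.Prime 5) := ⟨by norm_num⟩
  have hxz : (x : ZMod 5) ≠ 0 := fun h0 => hx ((ZMod.intCast_zmod_eq_zero_iff_dvd x 5).mp h0)
  have hqz : (q : ZMod 5) ≠ 0 := fun h0 => hq ((ZMod.intCast_zmod_eq_zero_iff_dvd q 5).mp h0)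
  have hez : ((ε : ZMod 5) = 1 ∨ (ε : ZMod 5) = -1) := by
    rcases hε with he | he <;> subst he <;> simp
  rcases le_or_gt l k with hl | hl
  · obtain ⟨m, rfl⟩ : ∃ m, k = l + m := ⟨k - l, by omega⟩
    have key : 2 * 5 ^ (2 * (l + m)) + ε * 2 * x ^ 2 * 5 ^ (2 * l) * 3 ^ (2 * j + 1) * q ^ 2
        = 5 ^ (2 * l) * (2 * 5 ^ (2 * m) + ε * 2 * x ^ 2 * 3 ^ (2 * j + 1) * q ^ 2) := by
      ring
    rw [key, show 2 * (l + m) + 1 = 2 * l + (2 * m + 1) by omega, pow_add] at h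
    have hB : (5 : ℤ) ^ (2 * m + 1) ∣ 2 * 5 ^ (2 * m) + ε * 2 * x ^ 2 * 3 ^ (2 * j + 1) * q ^ 2 :=
      (mul_dvd_mul_iff_left (a := (5:ℤ)^(2*l)) (by positivity)).mp h
    have h5 : (5 : ℤ) ∣ 2 * 5 ^ (2 * m) + ε * 2 * x ^ 2 * 3 ^ (2 * j + 1) * q ^ 2 :=
      dvd_trans (dvd_pow_self 5 (Nat.succ_ne_zero _)) hB
    have hz : ((2 * 5 ^ (2 * m) + ε * 2 * x ^ 2 * 3 ^ (2 * j + 1) * q ^ 2 : ℤ) : ZMod 5) = 0 :=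
      (ZMod.intCast_zmod_eq_zero_iff_dvd _ 5).mpr h5
    push_cast at hz
    rcases Nat.eq_zero_or_pos m with hm | hm
    · subst hm
      simp only [mul_zero, pow_zero, mul_one] at hz
      exact zmod5_aux _ _ _ _ hxz hqz hez (pow3_zmod5 j) (by linear_combination hz)
    · have h5z : (5 : ZMod 5) = 0 := z5_5
      have h50 : ((5 : ZMod 5)) ^ (2 * m) = 0 := by rw [h5z]; exact zero_pow (by omega)
      rw [h50, mul_zero, zero_add] at hz
      have h1 : (ε : ZMod 5) ≠ 0 := by
        rcases hez with he | he <;> rw [he]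
        exacts [z5_1, z5_neg1]
      have h2 : (2 : ZMod 5) ≠ 0 := z5_2
      have h3 : ((x : ZMod 5)) ^ 2 ≠ 0 := pow_ne_zero _ hxz
      have h4 : ((3 : ZMod 5)) ^ (2 * j + 1) ≠ 0 :=
        pow_ne_zero _ z5_3
      have h5q : ((q : ZMod 5)) ^ 2 ≠ 0 := pow_ne_zero _ hqz
      exact (mul_ne_zero (mul_ne_zero (mul_ne_zero (mul_ne_zero h1 h2) h3) h4) h5q) hz
  · have hdvd : (5 : ℤ) ^ (2 * k + 1) ∣ ε * 2 * x ^ 2 * 5 ^ (2 * l) * 3 ^ (2 * j + 1) * q ^ 2 := by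
      have : (5 : ℤ) ^ (2 * k + 1) ∣ 5 ^ (2 * l) := pow_dvd_pow 5 (by omega)
      exact dvd_mul_of_dvd_left (dvd_mul_of_dvd_left (Dvd.dvd.mul_left this _) _) _
    have h2 : (5 : ℤ) ^ (2 * k + 1) ∣ 2 * 5 ^ (2 * k) := (dvd_add_left hdvd).mp h
    have hle := Int.le_of_dvd (by positivity) h2
    have : (5 : ℤ) ^ (2 * k + 1) = 5 * 5 ^ (2 * k) := by ring
    nlinarith [pow_pos (by norm_num : (0:ℤ) < 5) (2 * k)]
end

section
/- Let j and k be natural numbers, let q be an integer not divisible by 5, let ε ∈ {1, −1}, and let x, y be integers. If 5^(2k+1) divides (as integers) 2·x²·5^(2k) + ε·2·3^(2j+1)·q²·y², then 5 divides x and 5^(k+1) divides y. -/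
lemma three_pow_odd (n : ℕ) : (3 : ZMod 5) ^ (2 * n + 1) = 2 ∨ (3 : ZMod 5) ^ (2 * n + 1) = 3 := by
  induction n with
  | zero => right; decide
  | succ m ih =>
    have hstep : (3 : ZMod 5) ^ (2 * (m + 1) + 1) = (3 : ZMod 5) ^ (2 * m + 1) * 4 := by
      have : 2 * (m + 1) + 1 = (2 * m + 1) + 2 := by ring
      rw [this, pow_add]; congr 1
    rcases ih with h | h
    · right; rw [hstep, h]; decide
    · left; rw [hstep, h]; decide

lemma zmod5_key (e T Q X Z : ZMod 5) (he : e = 1 ∨ e = -1) (hT : T = 2 ∨ T = 3)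
    (hQ : Q ≠ 0) (h : 2 * X ^ 2 + e * 2 * T * Q ^ 2 * Z ^ 2 = 0) : X = 0 ∧ Z = 0 := by
  rcases he with rfl | rfl <;> rcases hT with rfl | rfl <;> revert hQ h <;> revert Q X Z <;> decide

/-- Full computation underlying Theorem 2: if the self-linking of `(x, y)` in
`ℤ₅ ⊕ ℤ_{5^{2k+1}}` vanishes in `ℚ/ℤ`, then `5 ∣ x` and `5^{k+1} ∣ y`. -/
theorem self_linking_zero_elements (j k : ℕ) (q : ℤ) (hq : ¬ (5 : ℤ) ∣ q)
    (ε : ℤ) (hε : ε = 1 ∨ ε = -1) (x y : ℤ)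
    (h : (5 : ℤ) ^ (2 * k + 1) ∣
      2 * x ^ 2 * 5 ^ (2 * k) + ε * 2 * 3 ^ (2 * j + 1) * q ^ 2 * y ^ 2) :
    (5 : ℤ) ∣ x ∧ (5 : ℤ) ^ (k + 1) ∣ y := by
  have hp : Prime (5 : ℤ) := by norm_num
  set c : ℤ := ε * 2 * 3 ^ (2 * j + 1) * q ^ 2 with hc
  have hcnd : ¬ (5 : ℤ) ∣ c := by
    intro hd
    rcases hp.dvd_mul.mp hd with hd | hd
    · rcases hp.dvd_mul.mp hd with hd | hd
      · rcases hε with rfl | rfl <;> norm_num at hd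
      · exact absurd (hp.dvd_of_dvd_pow hd) (by norm_num)
    · exact hq (hp.dvd_of_dvd_pow hd)
  have hcop : IsCoprime ((5:ℤ) ^ (2 * k)) c :=
    IsCoprime.pow_left ((hp.coprime_iff_not_dvd).mpr hcnd)
  have h1 : (5 : ℤ) ^ (2 * k) ∣ 2 * x ^ 2 * 5 ^ (2 * k) + c * y ^ 2 :=
    dvd_trans (pow_dvd_pow 5 (Nat.le_succ _)) h
  have h2 : (5 : ℤ) ^ (2 * k) ∣ 2 * x ^ 2 * 5 ^ (2 * k) := dvd_mul_left _ _
  have h2k : (5 : ℤ) ^ (2 * k) ∣ c * y ^ 2 := by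
    have := dvd_sub h1 h2
    rwa [add_sub_cancel_left] at this
  have hy2 : (5 : ℤ) ^ (2 * k) ∣ y ^ 2 := hcop.dvd_of_dvd_mul_left h2k
  have hky : (5 : ℤ) ^ k ∣ y := by
    have h52 : ((5:ℤ) ^ k) ^ 2 ∣ y ^ 2 := by
      rwa [← pow_mul, mul_comm k 2]
    exact (Int.pow_dvd_pow_iff two_ne_zero).mp h52
  obtain ⟨z, rfl⟩ := hky
  have hz : (5 : ℤ) ∣ 2 * x ^ 2 + c * z ^ 2 := by
    have heq : 2 * x ^ 2 * 5 ^ (2 * k) + c * (5 ^ k * z) ^ 2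
        = 5 ^ (2 * k) * (2 * x ^ 2 + c * z ^ 2) := by ring
    have := h
    rw [heq, pow_succ] at this
    exact (mul_dvd_mul_iff_left (pow_ne_zero (2 * k) (by norm_num : (5:ℤ) ≠ 0))).mp this
  have hcast : ((2 * x ^ 2 + c * z ^ 2 : ℤ) : ZMod 5) = 0 :=
    (ZMod.intCast_zmod_eq_zero_iff_dvd _ 5).mpr hz
  have hQ : ((q : ℤ) : ZMod 5) ≠ 0 := fun h0 =>
    hq ((ZMod.intCast_zmod_eq_zero_iff_dvd q 5).mp h0)
  have he : ((ε : ℤ) : ZMod 5) = 1 ∨ ((ε : ℤ) : ZMod 5) = -1 := by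
    rcases hε with rfl | rfl <;> [left; right] <;> push_cast <;> ring
  have hmain : ((x : ℤ) : ZMod 5) = 0 ∧ ((z : ℤ) : ZMod 5) = 0 := by
    apply zmod5_key ((ε : ℤ) : ZMod 5) ((3 : ZMod 5) ^ (2 * j + 1)) (q : ZMod 5)
      (x : ZMod 5) (z : ZMod 5) he (three_pow_odd j) hQ
    rw [hc] at hcast
    push_cast at hcast
    linear_combination hcast
  constructor
  · exact (ZMod.intCast_zmod_eq_zero_iff_dvd x 5).mp hmain.1
  · rw [pow_succ]
    exact mul_dvd_mul_left _ ((ZMod.intCast_zmod_eq_zero_iff_dvd z 5).mp hmain.2)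
end
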